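/- For any two probability measures μ and ν on ℝ^d and any R > 0, the squared 2-Wasserstein distance satisfies W₂²(μ, ν) ≤ 4R² ‖μ − ν‖_TV + 2 E_{X∼μ}[‖X‖² 1{‖X‖ > R}] + 2R² P_{X∼μ}(‖X‖ > R) + 2 E_{Y∼ν}[‖Y‖² 1{‖Y‖ > R}] + 2R² P_{Y∼ν}(‖Y‖ > R). -/

import Mathlib

/-!
Couple `μ` and `ν` by keeping their common part `π` (read off a Hahn decomposition) on the
diagonal and pairing the remainders `μ - π` and `ν - π`, each of mass at most `TV(μ, ν)`,
independently. Only the independent part moves mass, and as `‖x - y‖² ≤ 2‖x‖² + 2‖y‖²` its cost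
is at most `2∫‖x‖² d(μ - π) + 2∫‖y‖² d(ν - π)`. Splitting each integral at radius `R` and using
`μ - π ≤ μ` bounds it by `R²` times the moved mass plus the tail integral of `μ` (resp. `ν`).
-/

open MeasureTheory

/-- Total variation distance between two measures: supremum over measurable sets. -/
noncomputable def tvDist {α : Type*} [MeasurableSpace α] (μ ν : Measure α) : ℝ :=
  ⨆ S : {S : Set α // MeasurableSet S}, |(μ S.1).toReal - (ν S.1).toReal|

/-- Squared 2-Wasserstein distance: infimum over couplings of the expected squared distance. -/
noncomputable def W2sq {α : Type*} [MeasurableSpace α] [NormedAddCommGroup α]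
    (μ ν : Measure α) : ℝ :=
  sInf {c : ℝ | ∃ γ : Measure (α × α), γ.map Prod.fst = μ ∧ γ.map Prod.snd = ν ∧
    c = ∫ p, ‖p.1 - p.2‖ ^ 2 ∂γ}

open Set
open scoped ENNReal

section TotalVariation

variable {α : Type*} [MeasurableSpace α] {μ ν : Measure α}

lemma tvDist_nonneg (μ ν : Measure α) : 0 ≤ tvDist μ ν :=
  Real.iSup_nonneg fun _ => abs_nonneg _

lemma measureReal_sub_le_tvDist [IsFiniteMeasure μ] [IsFiniteMeasure ν] {s : Set α}
    (hs : MeasurableSet s) : μ.real s - ν.real s ≤ tvDist μ ν := by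
  have hbdd : BddAbove (range fun S : {S : Set α // MeasurableSet S} =>
      |(μ S.1).toReal - (ν S.1).toReal|) := by
    refine ⟨μ.real univ + ν.real univ, ?_⟩
    rintro _ ⟨S, rfl⟩
    refine (abs_sub _ _).trans ?_
    simp only [← measureReal_def, abs_of_nonneg measureReal_nonneg]
    exact add_le_add (measureReal_mono (subset_univ _)) (measureReal_mono (subset_univ _))
  exact (le_abs_self _).trans (le_ciSup hbdd ⟨s, hs⟩)

/-- On a Hahn decomposition `s` for `(μ, ν)`, the measure `μ|s + ν|sᶜ` is the common part of
`μ` and `ν`; what `μ` has in excess of it is `μ sᶜ - ν sᶜ`. -/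
lemma exists_le_le_sub_measure_univ_le_tvDist [IsFiniteMeasure μ] [IsFiniteMeasure ν] :
    ∃ π : Measure α, π ≤ μ ∧ π ≤ ν ∧ (μ - π) univ ≤ ENNReal.ofReal (tvDist μ ν) := by
  obtain ⟨s, hs⟩ := exists_isHahnDecomposition μ ν
  have hsm := hs.measurableSet
  have hπμ : μ.restrict s + ν.restrict sᶜ ≤ μ := by
    conv_rhs => rw [← μ.restrict_add_restrict_compl hsm]
    exact add_le_add_right hs.ge_on_compl _
  refine ⟨_, hπμ, ?_, ?_⟩
  · conv_rhs => rw [← ν.restrict_add_restrict_compl hsm]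
    exact add_le_add_left hs.le_on _
  · rw [Measure.sub_apply MeasurableSet.univ hπμ, ← measure_add_measure_compl hsm,
      Measure.add_apply, Measure.restrict_apply_univ, Measure.restrict_apply_univ,
      ENNReal.add_sub_add_eq_sub_left (measure_ne_top _ _), tsub_le_iff_right,
      ← ofReal_measureReal, ← ofReal_measureReal, ← ENNReal.ofReal_add (tvDist_nonneg μ ν)
      measureReal_nonneg]
    have := measureReal_sub_le_tvDist (μ := μ) (ν := ν) hsm.compl
    exact ENNReal.ofReal_le_ofReal (by linarith)

end TotalVariation

section Coupling

variable {α β : Type*} [MeasurableSpace α] [MeasurableSpace β]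

lemma lintegral_comp_fst_add_comp_snd {γ : Measure (α × β)} {μ : Measure α} {ν : Measure β}
    (h₁ : γ.map Prod.fst = μ) (h₂ : γ.map Prod.snd = ν) {f : α → ℝ≥0∞} {g : β → ℝ≥0∞}
    (hf : Measurable f) (hg : Measurable g) :
    ∫⁻ p, f p.1 + g p.2 ∂γ = ∫⁻ x, f x ∂μ + ∫⁻ y, g y ∂ν := by
  have hf₁ : Measurable fun p : α × β => f p.1 := hf.comp measurable_fst
  rw [lintegral_add_left hf₁, ← h₁, ← h₂,
    lintegral_map hf measurable_fst, lintegral_map hg measurable_snd]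

lemma inv_measure_univ_smul_smul (μ : Measure α) [IsFiniteMeasure μ] :
    (μ univ)⁻¹ • μ univ • μ = μ := by
  rcases eq_or_ne (μ univ) 0 with h | h
  · simp [Measure.measure_univ_eq_zero.mp h]
  · rw [smul_smul, ENNReal.inv_mul_cancel h (measure_ne_top _ _), one_smul]

noncomputable def normalizedProd (μ : Measure α) (ν : Measure β) : Measure (α × β) :=
  (μ univ)⁻¹ • μ.prod ν

variable {μ : Measure α} {ν : Measure β}

lemma map_fst_normalizedProd [IsFiniteMeasure μ] [SFinite ν] (h : μ univ = ν univ) :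
    (normalizedProd μ ν).map Prod.fst = μ := by
  rw [normalizedProd, Measure.map_smul, Measure.map_fst_prod, ← h, inv_measure_univ_smul_smul]

lemma map_snd_normalizedProd [SFinite μ] [IsFiniteMeasure ν] (h : μ univ = ν univ) :
    (normalizedProd μ ν).map Prod.snd = ν := by
  rw [normalizedProd, Measure.map_smul, Measure.map_snd_prod, h, inv_measure_univ_smul_smul]

end Coupling

section CommonPartCoupling

variable {α : Type*} [MeasurableSpace α] {π μ ν : Measure α}

noncomputable def commonPartCoupling (π μ ν : Measure α) : Measure (α × α) :=
  π.map Function.diag + normalizedProd (μ - π) (ν - π)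

lemma sub_measure_univ_eq [IsFiniteMeasure μ] (hμ : π ≤ μ) (hν : π ≤ ν) (h : μ univ = ν univ) :
    (μ - π) univ = (ν - π) univ := by
  have : IsFiniteMeasure π := isFiniteMeasure_of_le μ hμ
  rw [Measure.sub_apply .univ hμ, Measure.sub_apply .univ hν, h]

variable [IsFiniteMeasure μ] [IsFiniteMeasure ν]

lemma map_fst_commonPartCoupling (hμ : π ≤ μ) (hν : π ≤ ν) (h : μ univ = ν univ) :
    (commonPartCoupling π μ ν).map Prod.fst = μ := by
  have : IsFiniteMeasure π := isFiniteMeasure_of_le μ hμ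
  rw [commonPartCoupling, Measure.map_add _ _ measurable_fst,
    Measure.map_map measurable_fst measurable_diag,
    map_fst_normalizedProd (sub_measure_univ_eq hμ hν h), Function.fst_comp_diag, Measure.map_id]
  exact (add_comm _ _).trans (Measure.sub_add_cancel_of_le hμ)

lemma map_snd_commonPartCoupling (hμ : π ≤ μ) (hν : π ≤ ν) (h : μ univ = ν univ) :
    (commonPartCoupling π μ ν).map Prod.snd = ν := by
  have : IsFiniteMeasure π := isFiniteMeasure_of_le μ hμ
  rw [commonPartCoupling, Measure.map_add _ _ measurable_snd,
    Measure.map_map measurable_snd measurable_diag,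
    map_snd_normalizedProd (sub_measure_univ_eq hμ hν h), Function.snd_comp_diag, Measure.map_id]
  exact (add_comm _ _).trans (Measure.sub_add_cancel_of_le hν)

lemma lintegral_commonPartCoupling_le (hμ : π ≤ μ) (hν : π ≤ ν) (h : μ univ = ν univ)
    {c : α × α → ℝ≥0∞} (hc : Measurable c) (hc_diag : ∀ x, c (x, x) = 0) {f g : α → ℝ≥0∞}
    (hf : Measurable f) (hg : Measurable g) (hcfg : ∀ x y, c (x, y) ≤ f x + g y) :
    ∫⁻ p, c p ∂commonPartCoupling π μ ν ≤ ∫⁻ x, f x ∂(μ - π) + ∫⁻ y, g y ∂(ν - π) := by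
  have hm := sub_measure_univ_eq hμ hν h
  rw [commonPartCoupling, lintegral_add_measure,
    lintegral_map hc measurable_diag, ← lintegral_comp_fst_add_comp_snd
      (map_fst_normalizedProd hm) (map_snd_normalizedProd hm) hf hg]
  simp only [Function.diag, hc_diag, lintegral_zero, zero_add]
  exact lintegral_mono fun p => hcfg p.1 p.2

end CommonPartCoupling

section SecondMoment

variable {E : Type*} [NormedAddCommGroup E]

lemma enorm_sub_sq_le (x y : E) : ‖x - y‖ₑ ^ 2 ≤ 2 * (‖x‖ₑ ^ 2 + ‖y‖ₑ ^ 2) :=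
  calc ‖x - y‖ₑ ^ 2 ≤ (‖x‖ₑ + ‖y‖ₑ) ^ 2 := by gcongr; exact enorm_sub_le
    _ ≤ 2 * (‖x‖ₑ ^ 2 + ‖y‖ₑ ^ 2) := by
      simp only [enorm_eq_nnnorm]
      exact_mod_cast (add_sq_le : (‖x‖₊ + ‖y‖₊) ^ 2 ≤ _)

lemma integral_norm_sq_eq_toReal_lintegral {α : Type*} [MeasurableSpace α] {μ : Measure α}
    {f : α → E} (hf : AEStronglyMeasurable f μ) :
    ∫ x, ‖f x‖ ^ 2 ∂μ = (∫⁻ x, ‖f x‖ₑ ^ 2 ∂μ).toReal := by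
  rw [← integral_toReal (hf.enorm.pow_const 2) (ae_of_all _ fun _ => by finiteness)]
  simp only [ENNReal.toReal_pow, toReal_enorm]

variable [MeasurableSpace E]

lemma lintegral_enorm_sq_le_of_le [OpensMeasurableSpace E] {ρ ρ₀ : Measure E} (h : ρ ≤ ρ₀)
    (R : ℝ) : ∫⁻ x, ‖x‖ₑ ^ 2 ∂ρ ≤
      ∫⁻ x in {x | R < ‖x‖}, ‖x‖ₑ ^ 2 ∂ρ₀ + ENNReal.ofReal (R ^ 2) * ρ univ := by
  have hS : MeasurableSet {x : E | R < ‖x‖} := measurableSet_lt measurable_const measurable_norm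
  rw [← lintegral_add_compl _ hS]
  gcongr ?_ + ?_
  · exact lintegral_mono' (Measure.restrict_mono subset_rfl h) le_rfl
  · calc ∫⁻ x in {x | R < ‖x‖}ᶜ, ‖x‖ₑ ^ 2 ∂ρ
          ≤ ∫⁻ _ in {x | R < ‖x‖}ᶜ, ENNReal.ofReal (R ^ 2) ∂ρ := by
            refine setLIntegral_mono measurable_const fun x hx => ?_
            rw [← ofReal_norm, ← ENNReal.ofReal_pow (norm_nonneg x)]
            exact ENNReal.ofReal_le_ofReal (pow_le_pow_left₀ (norm_nonneg x) (not_lt.mp hx) 2)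
      _ ≤ ENNReal.ofReal (R ^ 2) * ρ univ := by
            rw [setLIntegral_const]
            gcongr
            exact subset_univ _

lemma lintegral_enorm_sub_sq_eq_top {μ : Measure E} [IsFiniteMeasure μ]
    (h : ∫⁻ x, ‖x‖ₑ ^ 2 ∂μ = ∞) (y : E) : ∫⁻ x, ‖x - y‖ₑ ^ 2 ∂μ = ∞ := by
  by_contra! hne
  have hle : ∫⁻ x, ‖x‖ₑ ^ 2 ∂μ ≤ 2 * (∫⁻ x, ‖x - y‖ₑ ^ 2 ∂μ + ‖y‖ₑ ^ 2 * μ univ) :=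
    calc ∫⁻ x, ‖x‖ₑ ^ 2 ∂μ ≤ ∫⁻ x, 2 * (‖x - y‖ₑ ^ 2 + ‖-y‖ₑ ^ 2) ∂μ :=
          lintegral_mono fun x => by simpa using enorm_sub_sq_le (x - y) (-y)
      _ = _ := by
          rw [lintegral_const_mul' _ _ (by norm_num), lintegral_add_right _ measurable_const,
            lintegral_const, enorm_neg]
  rw [h, top_le_iff] at hle
  exact absurd hle (by finiteness)

variable [BorelSpace E] [SecondCountableTopology E]

lemma measurable_enorm_sub_sq : Measurable fun p : E × E => ‖p.1 - p.2‖ₑ ^ 2 :=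
  (measurable_fst.sub measurable_snd).enorm.pow_const 2

theorem exists_coupling_lintegral_enorm_sub_sq_le (μ ν : Measure E) [IsFiniteMeasure μ]
    [IsFiniteMeasure ν] (h : μ univ = ν univ) (R : ℝ) :
    ∃ γ : Measure (E × E), γ.map Prod.fst = μ ∧ γ.map Prod.snd = ν ∧
      ∫⁻ p, ‖p.1 - p.2‖ₑ ^ 2 ∂γ ≤ ENNReal.ofReal (4 * R ^ 2 * tvDist μ ν)
        + 2 * ∫⁻ x in {x | R < ‖x‖}, ‖x‖ₑ ^ 2 ∂μ + 2 * ∫⁻ y in {y | R < ‖y‖}, ‖y‖ₑ ^ 2 ∂ν := by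
  obtain ⟨π, hμ, hν, hm⟩ := exists_le_le_sub_measure_univ_le_tvDist (μ := μ) (ν := ν)
  refine ⟨commonPartCoupling π μ ν, map_fst_commonPartCoupling hμ hν h,
    map_snd_commonPartCoupling hμ hν h, ?_⟩
  have hsq : Measurable fun x : E => 2 * ‖x‖ₑ ^ 2 := by fun_prop
  calc ∫⁻ p, ‖p.1 - p.2‖ₑ ^ 2 ∂commonPartCoupling π μ ν
      ≤ ∫⁻ x, 2 * ‖x‖ₑ ^ 2 ∂(μ - π) + ∫⁻ y, 2 * ‖y‖ₑ ^ 2 ∂(ν - π) :=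
        lintegral_commonPartCoupling_le hμ hν h measurable_enorm_sub_sq (by simp) hsq hsq
          fun x y => (enorm_sub_sq_le x y).trans_eq (mul_add _ _ _)
    _ = 2 * ∫⁻ x, ‖x‖ₑ ^ 2 ∂(μ - π) + 2 * ∫⁻ y, ‖y‖ₑ ^ 2 ∂(ν - π) := by
        rw [lintegral_const_mul' _ _ (by norm_num), lintegral_const_mul' _ _ (by norm_num)]
    _ ≤ 2 * (∫⁻ x in {x | R < ‖x‖}, ‖x‖ₑ ^ 2 ∂μ + ENNReal.ofReal (R ^ 2) * (μ - π) univ)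
        + 2 * (∫⁻ y in {y | R < ‖y‖}, ‖y‖ₑ ^ 2 ∂ν + ENNReal.ofReal (R ^ 2) * (ν - π) univ) := by
        gcongr <;> exact lintegral_enorm_sq_le_of_le Measure.sub_le R
    _ = 4 * ENNReal.ofReal (R ^ 2) * (μ - π) univ
        + 2 * ∫⁻ x in {x | R < ‖x‖}, ‖x‖ₑ ^ 2 ∂μ + 2 * ∫⁻ y in {y | R < ‖y‖}, ‖y‖ₑ ^ 2 ∂ν := by
        rw [← sub_measure_univ_eq hμ hν h]
        ring
    _ ≤ _ := by
        rw [ENNReal.ofReal_mul (by positivity), ENNReal.ofReal_mul (by norm_num),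
          ENNReal.ofReal_ofNat]
        gcongr

lemma lintegral_prod_enorm_sub_sq_eq_top (μ ν : Measure E) [IsProbabilityMeasure μ]
    [IsProbabilityMeasure ν] (h : ∫⁻ x, ‖x‖ₑ ^ 2 ∂μ = ∞ ∨ ∫⁻ y, ‖y‖ₑ ^ 2 ∂ν = ∞) :
    ∫⁻ p, ‖p.1 - p.2‖ₑ ^ 2 ∂μ.prod ν = ∞ := by
  rcases h with h | h
  · rw [lintegral_prod_symm _ measurable_enorm_sub_sq.aemeasurable]
    simp [lintegral_enorm_sub_sq_eq_top h]
  · rw [lintegral_prod _ measurable_enorm_sub_sq.aemeasurable]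
    have hx (x : E) : ∫⁻ y, ‖x - y‖ₑ ^ 2 ∂ν = ∞ :=
      (lintegral_congr fun y => by rw [enorm_sub_rev]).trans (lintegral_enorm_sub_sq_eq_top h x)
    simp [hx]

end SecondMoment

section Wasserstein

variable {E : Type*} [NormedAddCommGroup E] [MeasurableSpace E] [BorelSpace E]
  [SecondCountableTopology E] {μ ν : Measure E}

lemma W2sq_le_toReal_lintegral {γ : Measure (E × E)} (h₁ : γ.map Prod.fst = μ)
    (h₂ : γ.map Prod.snd = ν) : W2sq μ ν ≤ (∫⁻ p, ‖p.1 - p.2‖ₑ ^ 2 ∂γ).toReal := by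
  refine csInf_le ⟨0, ?_⟩ ⟨γ, h₁, h₂, (integral_norm_sq_eq_toReal_lintegral
    (f := fun p : E × E => p.1 - p.2) (by fun_prop)).symm⟩
  rintro _ ⟨γ', -, -, rfl⟩
  exact integral_nonneg fun _ => by positivity

lemma W2sq_le_tvDist_add_tails_of_ne_top [IsFiniteMeasure μ] [IsFiniteMeasure ν]
    (h : μ univ = ν univ) (R : ℝ) (hμ : ∫⁻ x in {x | R < ‖x‖}, ‖x‖ₑ ^ 2 ∂μ ≠ ∞)
    (hν : ∫⁻ y in {y | R < ‖y‖}, ‖y‖ₑ ^ 2 ∂ν ≠ ∞) :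
    W2sq μ ν ≤ 4 * R ^ 2 * tvDist μ ν + 2 * ∫ x in {x | R < ‖x‖}, ‖x‖ ^ 2 ∂μ
      + 2 * ∫ y in {y | R < ‖y‖}, ‖y‖ ^ 2 ∂ν := by
  obtain ⟨γ, h₁, h₂, hγ⟩ := exists_coupling_lintegral_enorm_sub_sq_le μ ν h R
  refine (W2sq_le_toReal_lintegral h₁ h₂).trans
    ((ENNReal.toReal_mono (by finiteness) hγ).trans_eq ?_)
  rw [integral_norm_sq_eq_toReal_lintegral (f := fun x : E => x) aestronglyMeasurable_id,
    integral_norm_sq_eq_toReal_lintegral (f := fun x : E => x) aestronglyMeasurable_id]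
  have htv := tvDist_nonneg μ ν
  rw [ENNReal.toReal_add (by finiteness) (by finiteness),
    ENNReal.toReal_add (by finiteness) (by finiteness), ENNReal.toReal_ofReal (by positivity)]
  simp only [ENNReal.toReal_mul, ENNReal.toReal_ofNat]

-- The cost is not integrable for the product coupling, and the Bochner integral in `W2sq` is `0`
-- for non-integrable functions.
lemma W2sq_nonpos_of_lintegral_eq_top [IsProbabilityMeasure μ] [IsProbabilityMeasure ν]
    (h : ∫⁻ x, ‖x‖ₑ ^ 2 ∂μ = ∞ ∨ ∫⁻ y, ‖y‖ₑ ^ 2 ∂ν = ∞) : W2sq μ ν ≤ 0 := by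
  refine (W2sq_le_toReal_lintegral (γ := μ.prod ν) (by simp) (by simp)).trans_eq ?_
  rw [lintegral_prod_enorm_sub_sq_eq_top μ ν h, ENNReal.toReal_top]

theorem W2sq_le_tvDist_add_tails [IsProbabilityMeasure μ] [IsProbabilityMeasure ν] (R : ℝ) :
    W2sq μ ν ≤ 4 * R ^ 2 * tvDist μ ν + 2 * ∫ x in {x | R < ‖x‖}, ‖x‖ ^ 2 ∂μ
      + 2 * ∫ y in {y | R < ‖y‖}, ‖y‖ ^ 2 ∂ν := by
  by_cases htail :
      ∫⁻ x in {x | R < ‖x‖}, ‖x‖ₑ ^ 2 ∂μ = ∞ ∨ ∫⁻ y in {y | R < ‖y‖}, ‖y‖ₑ ^ 2 ∂ν = ∞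
  · have hmoment : ∫⁻ x, ‖x‖ₑ ^ 2 ∂μ = ∞ ∨ ∫⁻ y, ‖y‖ₑ ^ 2 ∂ν = ∞ :=
      htail.imp (eq_top_mono (setLIntegral_le_lintegral _ _))
        (eq_top_mono (setLIntegral_le_lintegral _ _))
    have htv := tvDist_nonneg μ ν
    exact (W2sq_nonpos_of_lintegral_eq_top hmoment).trans (by positivity)
  · obtain ⟨hμ, hν⟩ := not_or.mp htail
    exact W2sq_le_tvDist_add_tails_of_ne_top (by simp) R hμ hν

end Wasserstein

theorem stmt0_general (d : ℕ) (μ ν : Measure (EuclideanSpace ℝ (Fin d)))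
    [IsProbabilityMeasure μ] [IsProbabilityMeasure ν] (R : ℝ) :
    W2sq μ ν ≤ 4 * R ^ 2 * tvDist μ ν
      + 2 * ∫ x in {x : EuclideanSpace ℝ (Fin d) | R < ‖x‖}, ‖x‖ ^ 2 ∂μ
      + 2 * R ^ 2 * (μ {x | R < ‖x‖}).toReal
      + 2 * ∫ y in {y : EuclideanSpace ℝ (Fin d) | R < ‖y‖}, ‖y‖ ^ 2 ∂ν
      + 2 * R ^ 2 * (ν {y | R < ‖y‖}).toReal := by
  have hPμ : 0 ≤ 2 * R ^ 2 * (μ {x | R < ‖x‖}).toReal := by positivity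
  have hPν : 0 ≤ 2 * R ^ 2 * (ν {y | R < ‖y‖}).toReal := by positivity
  linarith [W2sq_le_tvDist_add_tails (μ := μ) (ν := ν) R]

theorem stmt0 (d : ℕ) (μ ν : Measure (EuclideanSpace ℝ (Fin d)))
    [IsProbabilityMeasure μ] [IsProbabilityMeasure ν] (R : ℝ) (hR : 0 < R) :
    W2sq μ ν ≤ 4 * R ^ 2 * tvDist μ ν
      + 2 * ∫ x in {x : EuclideanSpace ℝ (Fin d) | R < ‖x‖}, ‖x‖ ^ 2 ∂μ
      + 2 * R ^ 2 * (μ {x | R < ‖x‖}).toReal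
      + 2 * ∫ y in {y : EuclideanSpace ℝ (Fin d) | R < ‖y‖}, ‖y‖ ^ 2 ∂ν
      + 2 * R ^ 2 * (ν {y | R < ‖y‖}).toReal :=
  stmt0_general d μ ν R
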